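/- Let G be a graph and k ≥ 1 an integer. There exist k perfect-or-partial 2-matchings of G (i.e., k subgraphs each of which is a disjoint union of edges and circuits) whose union covers every vertex of G if and only if |S| ≤ k·|N(S)| for every stable set S of G. -/

import Mathlib

/-- `M` is a matching of `G`: a set of edges of `G` that are pairwise vertex-disjoint. -/
def IsMatching {V : Type*} (G : SimpleGraph V) (M : Finset (Sym2 V)) : Prop :=
  ↑M ⊆ G.edgeSet ∧ (M : Set (Sym2 V)).Pairwise fun e f => ∀ v : V, ¬(v ∈ e ∧ v ∈ f)

/-- A vertex `v` is covered by an edge set `F` if some edge of `F` is incident to it. -/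
def Covers {V : Type*} (F : Finset (Sym2 V)) (v : V) : Prop := ∃ e ∈ F, v ∈ e

instance {V : Type*} [DecidableEq V] (F : Finset (Sym2 V)) (v : V) : Decidable (Covers F v) :=
  inferInstanceAs (Decidable (∃ e ∈ F, v ∈ e))

/-- A stable (independent) set of vertices. -/
def IsStable {V : Type*} (G : SimpleGraph V) (S : Finset V) : Prop :=
  ∀ u ∈ S, ∀ v ∈ S, ¬ G.Adj u v

/-- The external neighborhood `N(S)`. -/
def nbr {V : Type*} [Fintype V] [DecidableEq V] (G : SimpleGraph V) [DecidableRel G.Adj]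
    (S : Finset V) : Finset V :=
  Finset.univ.filter fun w => w ∉ S ∧ ∃ u ∈ S, G.Adj u w

/-- degree of a vertex in an edge set -/
def degF {V : Type*} [DecidableEq V] (F : Finset (Sym2 V)) (v : V) : ℕ :=
  (F.filter fun e => v ∈ e).card

/-- `F` is a 2-matching of `G`: a vertex-disjoint collection of edges and circuits.
Equivalently, all degrees are at most 2 and any edge having an endpoint of degree 1
has both endpoints of degree 1 (so components are single edges or circuits). -/
def Is2Matching {V : Type*} [DecidableEq V] (G : SimpleGraph V) (F : Finset (Sym2 V)) : Prop :=
  ↑F ⊆ G.edgeSet ∧ (∀ v : V, degF F v ≤ 2) ∧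
    ∀ e ∈ F, ∀ u : V, u ∈ e → degF F u = 1 → ∀ w ∈ e, degF F w = 1

/-
Necessity: a 2-matching `F` covers at most `|N(S)|` vertices of a stable set `S`. Give each
edge of `F` at a vertex `v ∈ S` the weight `2 / deg v`, so that each covered vertex of `S`
sends out total weight 2. All these edges end in `N(S)`, and a vertex of `N(S)` receives at most
2: it has at most two such edges, and if it has two, neither partner has degree 1, since an edge
at a vertex of degree 1 is a whole component.

Sufficiency: on stable sets the hypothesis gives Hall's condition for choosing, injectively, a
pair (neighbour `g v`, colour) for every vertex `v`. In one colour class `g` is injective, so the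
arcs `v → g v` form disjoint paths and cycles; the cycles together with every other arc of each
path form a 2-matching covering the class.
-/

open Finset

section TwoMatching

variable {V : Type*} [DecidableEq V] {G : SimpleGraph V} {F : Finset (Sym2 V)}

lemma covers_iff_degF_pos {v : V} : Covers F v ↔ 0 < degF F v := by
  simp [Covers, degF, card_pos, Finset.Nonempty]

lemma degF_eq_one_iff {e : Sym2 V} {v : V} (he : e ∈ F) (hv : v ∈ e) :
    degF F v = 1 ↔ ∀ f ∈ F, v ∈ f → f = e := by
  rw [degF, card_eq_one]
  constructor
  · rintro ⟨a, ha⟩ f hf hvf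
    have hfa : f ∈ F.filter (v ∈ ·) := mem_filter.2 ⟨hf, hvf⟩
    have hea : e ∈ F.filter (v ∈ ·) := mem_filter.2 ⟨he, hv⟩
    rw [ha, mem_singleton] at hfa hea
    rw [hfa, hea]
  · intro h
    refine ⟨e, eq_singleton_iff_unique_mem.2 ⟨mem_filter.2 ⟨he, hv⟩, fun f hf => ?_⟩⟩
    exact h f (mem_filter.1 hf).1 (mem_filter.1 hf).2

lemma card_filter_mk_mem_le_degF (F : Finset (Sym2 V)) (w : V) (A : Finset V) :
    #(A.filter fun v => s(v, w) ∈ F) ≤ degF F w :=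
  card_le_card_of_injOn (fun v => s(v, w))
    (fun _ hv => mem_filter.2 ⟨(mem_filter.1 hv).2, Sym2.mem_mk_right _ _⟩)
    fun _ _ _ _ => Sym2.congr_left.1

lemma two_mul_card_filter_covers (hF : Is2Matching G F) (S : Finset V) :
    2 * #(S.filter (Covers F)) = ∑ v ∈ S, 2 / degF F v * degF F v := by
  rw [card_filter, mul_sum]
  refine sum_congr rfl fun v _ => ?_
  have := hF.2.1 v
  simp only [covers_iff_degF_pos]
  interval_cases degF F v <;> rfl

lemma sum_two_div_degF_le_two (hF : Is2Matching G F) (w : V) (A : Finset V) :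
    ∑ v ∈ A.filter (fun v => s(v, w) ∈ F), 2 / degF F v ≤ 2 := by
  set B := A.filter fun v => s(v, w) ∈ F
  have hB : #B ≤ degF F w := card_filter_mk_mem_le_degF F w A
  rcases le_or_gt #B 1 with hB1 | hB2
  · calc ∑ v ∈ B, 2 / degF F v ≤ #B • 2 :=
          sum_le_card_nsmul _ _ _ fun _ _ => Nat.div_le_self _ _
      _ ≤ 2 := by rw [smul_eq_mul]; omega
  · have hterm : ∀ v ∈ B, 2 / degF F v ≤ 1 := fun v hv => by
      have hv1 : degF F v ≠ 1 := fun h => by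
        have := hF.2.2 _ (mem_filter.1 hv).2 v (Sym2.mem_mk_left _ _) h w (Sym2.mem_mk_right _ _)
        omega
      have := hF.2.1 v
      interval_cases degF F v <;> simp_all
    calc ∑ v ∈ B, 2 / degF F v ≤ #B • 1 := sum_le_card_nsmul _ _ _ hterm
      _ ≤ 2 := by have := hF.2.1 w; rw [smul_eq_mul]; omega

end TwoMatching

section Arcs

variable {V : Type*} [DecidableEq V]

def arcEdges (g : V → V) (K : Finset V) : Finset (Sym2 V) :=
  K.image fun v => s(v, g v)

variable {G : SimpleGraph V} {g : V → V} {K : Finset V}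

lemma mem_arcEdges {e : Sym2 V} : e ∈ arcEdges g K ↔ ∃ v ∈ K, s(v, g v) = e :=
  mem_image

lemma covers_arcEdges {v : V} (hv : v ∈ K ∪ K.image g) : Covers (arcEdges g K) v := by
  rcases mem_union.1 hv with hv | hv
  · exact ⟨s(v, g v), mem_arcEdges.2 ⟨v, hv, rfl⟩, Sym2.mem_mk_left _ _⟩
  · obtain ⟨u, hu, rfl⟩ := mem_image.1 hv
    exact ⟨s(u, g u), mem_arcEdges.2 ⟨u, hu, rfl⟩, Sym2.mem_mk_right _ _⟩

/-- The last condition says that a kept arc `v → g v` either continues a kept arc and is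
continued by one, or neither: kept arcs form cycles and isolated edges. To build `K`, keep the
first arc `v → g v` of a path and recurse after deleting `v` and `g v`; once no path starts in
`C`, keep all of `C`. -/
lemma exists_subset_covers_mem_iff (g : V → V) (C : Finset V) :
    ∃ K ⊆ C, C ⊆ K ∪ K.image g ∧ ∀ v ∈ K, (g v ∈ K ↔ v ∈ K.image g) := by
  induction C using Finset.strongInduction with
  | _ C ih =>
    by_cases hsrc : ∃ v ∈ C, v ∉ C.image g
    · obtain ⟨v, hv, hvg⟩ := hsrc
      obtain ⟨K, hKC, hcov, hK⟩ :=
        ih (C \ {v, g v}) ((ssubset_iff_of_subset sdiff_subset).2 ⟨v, hv, by simp⟩)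
      have hKC' : insert v K ⊆ C := insert_subset hv (hKC.trans sdiff_subset)
      have hKv : ∀ x ∈ K, x ≠ v ∧ x ≠ g v := fun x hx => by
        simpa using (mem_sdiff.1 (hKC hx)).2
      have hgv : ∀ x ∈ insert v K, g x ≠ v := fun x hx h =>
        hvg (mem_image.2 ⟨x, hKC' hx, h⟩)
      refine ⟨insert v K, hKC', fun x hx => ?_, fun x hx => ?_⟩
      · by_cases hxv : x ∈ ({v, g v} : Finset V)
        · rcases mem_insert.1 hxv with rfl | hxg
          · exact mem_union_left _ (mem_insert_self _ _)
          · rw [mem_singleton.1 hxg]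
            exact mem_union_right _ (mem_image_of_mem g (mem_insert_self _ _))
        · rcases mem_union.1 (hcov (mem_sdiff.2 ⟨hx, hxv⟩)) with h | h
          · exact mem_union_left _ (mem_insert_of_mem h)
          · exact mem_union_right _ (image_subset_image (subset_insert _ _) h)
      · rcases mem_insert.1 hx with rfl | hxK
        · refine iff_of_false (fun h => ?_) fun h => hvg (image_subset_image hKC' h)
          rcases mem_insert.1 h with h | h
          · exact hgv x hx h
          · exact (hKv _ h).2 rfl
        · rw [mem_insert, image_insert, mem_insert, hK x hxK, or_iff_right (hgv x hx),
            or_iff_right (hKv x hxK).2]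
    · push Not at hsrc
      have hC : C = C.image g := eq_of_subset_of_card_le hsrc card_image_le
      refine ⟨C, subset_rfl, subset_union_left, fun v hv => ?_⟩
      have hgv : g v ∈ C := by
        rw [hC]
        exact mem_image_of_mem g hv
      exact ⟨fun _ => hsrc v hv, fun _ => hgv⟩

lemma degF_arcEdges_le_two (hinj : Set.InjOn g K) (w : V) : degF (arcEdges g K) w ≤ 2 := by
  have hsub : (arcEdges g K).filter (w ∈ ·) ⊆
      (insert w (K.filter (g · = w))).image fun v => s(v, g v) := by
    intro e he
    obtain ⟨⟨y, hy, rfl⟩, hwy⟩ := And.imp_left mem_arcEdges.1 (mem_filter.1 he)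
    refine mem_image.2 ⟨y, ?_, rfl⟩
    rcases Sym2.mem_iff.1 hwy with rfl | h
    · exact mem_insert_self _ _
    · exact mem_insert_of_mem (mem_filter.2 ⟨hy, h.symm⟩)
  have hpre : #(K.filter (g · = w)) ≤ 1 := card_le_one.2 fun a ha b hb => by
    rw [mem_filter] at ha hb
    exact hinj ha.1 hb.1 (ha.2.trans hb.2.symm)
  calc degF (arcEdges g K) w ≤ #((insert w (K.filter (g · = w))).image fun v => s(v, g v)) :=
        card_le_card hsub
    _ ≤ #(insert w (K.filter (g · = w))) := card_image_le
    _ ≤ #(K.filter (g · = w)) + 1 := card_insert_le _ _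
    _ ≤ 2 := by omega

lemma degF_arcEdges_eq_one (hinj : Set.InjOn g K)
    (hK : ∀ v ∈ K, (g v ∈ K ↔ v ∈ K.image g)) {x z : V} (hx : x ∈ K)
    (hcyc : g x ∈ K → g (g x) = x) (hz : z ∈ s(x, g x)) :
    degF (arcEdges g K) z = 1 := by
  refine (degF_eq_one_iff (mem_arcEdges.2 ⟨x, hx, rfl⟩) hz).2 fun e he hze => ?_
  obtain ⟨y, hy, rfl⟩ := mem_arcEdges.1 he
  have hswap : g x ∈ K → s(g x, g (g x)) = s(x, g x) := fun h => by rw [hcyc h, Sym2.eq_swap]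
  rcases Sym2.mem_iff.1 hz with rfl | rfl <;> rcases Sym2.mem_iff.1 hze with h | h
  · rw [h]
  · have hgz : g z ∈ K := (hK z hx).2 (mem_image.2 ⟨y, hy, h.symm⟩)
    rw [hinj hy hgz (h.symm.trans (hcyc hgz).symm), hswap hgz]
  · rw [← h, hswap (h ▸ hy)]
  · rw [hinj hy hx h.symm]

lemma degF_arcEdges_ne_one (hadj : ∀ v ∈ K, G.Adj v (g v))
    (hK : ∀ v ∈ K, (g v ∈ K ↔ v ∈ K.image g)) {x z : V} (hx : x ∈ K) (hgx : g x ∈ K)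
    (hcyc : g (g x) ≠ x) (hz : z ∈ s(x, g x)) : degF (arcEdges g K) z ≠ 1 := by
  have hxg : x ≠ g x := (hadj x hx).ne
  rw [ne_eq, degF_eq_one_iff (mem_arcEdges.2 ⟨x, hx, rfl⟩) hz]
  intro h
  rcases Sym2.mem_iff.1 hz with rfl | rfl
  · obtain ⟨u, hu, hux⟩ := mem_image.1 ((hK z hx).1 hgx)
    have := h _ (mem_arcEdges.2 ⟨u, hu, rfl⟩) (hux ▸ Sym2.mem_mk_right _ _)
    rw [hux, Sym2.eq_iff] at this
    rcases this with ⟨-, h'⟩ | ⟨rfl, -⟩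
    · exact hxg h'
    · exact hcyc hux
  · have := h _ (mem_arcEdges.2 ⟨g x, hgx, rfl⟩) (Sym2.mem_mk_left _ _)
    rw [Sym2.eq_iff] at this
    rcases this with ⟨h', -⟩ | ⟨-, h'⟩
    · exact hxg h'.symm
    · exact hcyc h'

lemma is2Matching_arcEdges (hadj : ∀ v ∈ K, G.Adj v (g v)) (hinj : Set.InjOn g K)
    (hK : ∀ v ∈ K, (g v ∈ K ↔ v ∈ K.image g)) : Is2Matching G (arcEdges g K) := by
  refine ⟨fun e he => ?_, degF_arcEdges_le_two hinj, fun e he u hu hdeg w hw => ?_⟩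
  · obtain ⟨v, hv, rfl⟩ := mem_arcEdges.1 he
    exact hadj v hv
  · obtain ⟨x, hx, rfl⟩ := mem_arcEdges.1 he
    by_cases hcyc : g x ∈ K → g (g x) = x
    · exact degF_arcEdges_eq_one hinj hK hx hcyc hw
    · push Not at hcyc
      exact absurd hdeg (degF_arcEdges_ne_one hadj hK hx hcyc.1 hcyc.2 hu)

lemma exists_is2Matching_covers {C : Finset V} (hadj : ∀ v ∈ C, G.Adj v (g v))
    (hinj : Set.InjOn g C) : ∃ F, Is2Matching G F ∧ ∀ v ∈ C, Covers F v := by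
  obtain ⟨K, hKC, hcov, hK⟩ := exists_subset_covers_mem_iff g C
  exact ⟨arcEdges g K, is2Matching_arcEdges (fun v hv => hadj v (hKC hv))
    (hinj.mono (coe_subset.2 hKC)) hK, fun v hv => covers_arcEdges (hcov hv)⟩

end Arcs

section Counting

variable {V : Type*} [Fintype V] [DecidableEq V] {G : SimpleGraph V} [DecidableRel G.Adj]
  {F : Finset (Sym2 V)} {S : Finset V}

lemma degF_eq_card_filter_nbr (hF : ↑F ⊆ G.edgeSet) (hS : IsStable G S) {v : V} (hv : v ∈ S) :
    degF F v = #((nbr G S).filter fun w => s(v, w) ∈ F) := by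
  refine (card_bij (fun w _ => s(v, w)) (fun w hw => ?_) (fun _ _ _ _ h => Sym2.congr_right.1 h)
    fun e he => ?_).symm
  · exact mem_filter.2 ⟨(mem_filter.1 hw).2, Sym2.mem_mk_left _ _⟩
  · obtain ⟨heF, hve⟩ := mem_filter.1 he
    obtain ⟨w, rfl⟩ := Sym2.mem_iff_exists.1 hve
    have hvw : G.Adj v w := hF heF
    refine ⟨w, mem_filter.2 ⟨?_, heF⟩, rfl⟩
    simp only [nbr, mem_filter, mem_univ, true_and]
    exact ⟨fun hw => hS v hv w hw hvw, v, hv, hvw⟩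

lemma card_filter_covers_le_card_nbr (hF : Is2Matching G F) (hS : IsStable G S) :
    #(S.filter (Covers F)) ≤ #(nbr G S) := by
  have key : 2 * #(S.filter (Covers F)) ≤ 2 * #(nbr G S) :=
    calc 2 * #(S.filter (Covers F)) = ∑ v ∈ S, 2 / degF F v * degF F v :=
          two_mul_card_filter_covers hF S
      _ = ∑ v ∈ S, ∑ w ∈ nbr G S, if s(v, w) ∈ F then 2 / degF F v else 0 :=
          sum_congr rfl fun v hv => by
            rw [← sum_filter, sum_const, smul_eq_mul, ← degF_eq_card_filter_nbr hF.1 hS hv,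
              mul_comm]
      _ = ∑ w ∈ nbr G S, ∑ v ∈ S.filter (fun v => s(v, w) ∈ F), 2 / degF F v := by
          rw [sum_comm]
          simp only [sum_filter]
      _ ≤ ∑ _w ∈ nbr G S, 2 := sum_le_sum fun w _ => sum_two_div_degF_le_two hF w S
      _ = 2 * #(nbr G S) := by rw [sum_const, smul_eq_mul, mul_comm]
  omega

end Counting

section Hall

variable {V : Type*} [Fintype V] [DecidableEq V] {G : SimpleGraph V} [DecidableRel G.Adj]
  {k : ℕ}

/-- The vertices of `A` without a neighbour in `A` form a stable set `S`, and `N(S)` and `A \ S`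
are disjoint parts of `N(A)`. -/
lemma card_le_mul_card_biUnion_neighborFinset
    (hS : ∀ S : Finset V, IsStable G S → #S ≤ k * #(nbr G S)) (A : Finset V) :
    #A ≤ k * #(A.biUnion fun v => G.neighborFinset v) := by
  set S := A.filter fun v => ∀ u ∈ A, ¬ G.Adj u v
  have hstable : IsStable G S := fun u hu v hv huv =>
    (mem_filter.1 hv).2 u (mem_filter.1 hu).1 huv
  have hdisj : Disjoint (nbr G S) (A \ S) := by
    refine disjoint_left.2 fun w hw hwA => ?_
    obtain ⟨-, u, hu, huw⟩ := by simpa [nbr] using hw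
    exact (mem_filter.1 hu).2 w (mem_sdiff.1 hwA).1 huw.symm
  have hsub : nbr G S ∪ (A \ S) ⊆ A.biUnion fun v => G.neighborFinset v := by
    refine union_subset (fun w hw => ?_) fun v hv => ?_
    · obtain ⟨-, u, hu, huw⟩ := by simpa [nbr] using hw
      exact mem_biUnion.2 ⟨u, (mem_filter.1 hu).1, by simpa using huw⟩
    · obtain ⟨hvA, hvS⟩ := mem_sdiff.1 hv
      obtain ⟨u, hu, huv⟩ : ∃ u ∈ A, G.Adj u v := by simpa [S, hvA] using hvS
      exact mem_biUnion.2 ⟨u, hu, by simpa using huv⟩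
  have hAS : #(A \ S) ≤ k * #(A \ S) := by
    rcases (A \ S).eq_empty_or_nonempty with h | ⟨v, -⟩
    · simp [h]
    · have hv : IsStable G {v} := by simp [IsStable]
      have : 1 ≤ k * #(nbr G {v}) := by simpa using hS {v} hv
      exact Nat.le_mul_of_pos_left _ (Nat.pos_of_mul_pos_right this)
  calc #A = #S + #(A \ S) := by rw [add_comm, card_sdiff_add_card_eq_card (filter_subset _ _)]
    _ ≤ k * #(nbr G S) + k * #(A \ S) := add_le_add (hS S hstable) hAS
    _ = k * #(nbr G S ∪ (A \ S)) := by rw [card_union_of_disjoint hdisj, mul_add]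
    _ ≤ k * #(A.biUnion fun v => G.neighborFinset v) := Nat.mul_le_mul_left _ (card_le_card hsub)

lemma exists_injective_adj_fst (hS : ∀ S : Finset V, IsStable G S → #S ≤ k * #(nbr G S)) :
    ∃ f : V → V × Fin k, Function.Injective f ∧ ∀ v, G.Adj v (f v).1 := by
  obtain ⟨f, hf, hft⟩ := (all_card_le_biUnion_card_iff_exists_injective
    fun v => G.neighborFinset v ×ˢ (univ : Finset (Fin k))).1 fun A => by
      have : A.biUnion (fun v => G.neighborFinset v ×ˢ (univ : Finset (Fin k))) =
          (A.biUnion fun v => G.neighborFinset v) ×ˢ univ := by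
        ext
        simp
      rw [this, card_product, card_univ, Fintype.card_fin, mul_comm]
      exact card_le_mul_card_biUnion_neighborFinset hS A
  exact ⟨f, hf, fun v => by simpa using (mem_product.1 (hft v)).1⟩

end Hall

theorem stmt_12_general {V : Type*} [Fintype V] [DecidableEq V] (G : SimpleGraph V) [DecidableRel G.Adj]
    (k : ℕ) :
    (∃ H : Fin k → Finset (Sym2 V),
        (∀ i, Is2Matching G (H i)) ∧ ∀ v : V, ∃ i, Covers (H i) v) ↔
      ∀ S : Finset V, IsStable G S → S.card ≤ k * (nbr G S).card := by
  constructor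
  · rintro ⟨H, hH, hcov⟩ S hS
    have hsub : S ⊆ univ.biUnion fun i => S.filter (Covers (H i)) := fun v hv => by
      obtain ⟨i, hi⟩ := hcov v
      exact mem_biUnion.2 ⟨i, mem_univ _, mem_filter.2 ⟨hv, hi⟩⟩
    calc #S ≤ ∑ i, #(S.filter (Covers (H i))) := (card_le_card hsub).trans card_biUnion_le
      _ ≤ ∑ _i : Fin k, #(nbr G S) :=
          sum_le_sum fun i _ => card_filter_covers_le_card_nbr (hH i) hS
      _ = k * #(nbr G S) := by simp
  · intro hS
    obtain ⟨f, hf, hadj⟩ := exists_injective_adj_fst hS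
    choose H hH hcov using fun i : Fin k =>
      exists_is2Matching_covers (G := G) (g := fun v => (f v).1)
        (C := univ.filter fun v => (f v).2 = i) (fun v _ => hadj v) fun u hu v hv huv =>
          hf (Prod.ext huv ((mem_filter.1 hu).2.trans (mem_filter.1 hv).2.symm))
    exact ⟨H, hH, fun v => ⟨(f v).2, hcov _ v (by simp)⟩⟩

theorem stmt_12 {V : Type*} [Fintype V] [DecidableEq V] (G : SimpleGraph V) [DecidableRel G.Adj]
    (k : ℕ) (hk : 1 ≤ k) :
    (∃ H : Fin k → Finset (Sym2 V),
        (∀ i, Is2Matching G (H i)) ∧ ∀ v : V, ∃ i, Covers (H i) v) ↔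
      ∀ S : Finset V, IsStable G S → S.card ≤ k * (nbr G S).card :=
  stmt_12_general G k
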